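/- arXiv:1304.7044 — 5 statements merged into one kernel-verified Lean document; each statement's English description precedes it below -/
import Mathlib

section
/- Let m be a positive integer and F = 𝔽_{2^{3m}}. The function f : F → F defined by f(x) = x^{2^m+1} + x^{2^{2m}+2^m} is pseudo-planar on F if and only if for every ε ∈ F with ε ≠ 0 one has N₃(ε) + Tr₃(ε^{3} + ε^{1+2^{m+1}}) ≠ 0. -/
/-!
With `σ x = x ^ 2 ^ m`, an automorphism of order 3 of `F = 𝔽_{2^{3m}}`, one has
`f x = σ x * x + σ² x * σ x`, so `x ↦ f (x + ε) + f x + ε * x` is a translate of the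
`σ`-linearized map `L x = (ε + σ ε) x + (ε + σ² ε) σ x + σ ε σ² x`. Such a map is bijective
exactly when its Dickson matrix `(σ^j (a_{k-j}))_{j,k}` is invertible: the matrix sends
`(σ^k x)_k` to `(σ^j (L x))_j`, so a nonzero determinant forces a trivial kernel, while a
left null vector `w` gives `∑ w_j σ^j ∘ L = 0`, impossible for surjective `L` by Dedekind's
independence of the characters `σ^j`. In characteristic 2 the Dickson determinant of `L` is
`N₃(ε) + Tr₃(ε³ + ε σ(ε)²)`.
-/

open Function Matrix

section Dickson

variable {K : Type*} [Field K] {n : ℕ}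

def linearizedMap (σ : K →+* K) (a : Fin n → K) : K →+ K where
  toFun x := ∑ i, a i * (σ ^ (i : ℕ)) x
  map_zero' := by simp
  map_add' x y := by simp only [map_add, mul_add, Finset.sum_add_distrib]

def dicksonMatrix (σ : K →+* K) (a : Fin n → K) : Matrix (Fin n) (Fin n) K :=
  Matrix.of fun j k => (σ ^ (j : ℕ)) (a (k - j))

variable {σ : K →+* K}

theorem linearIndependent_pow_of_orderOf_eq (hσ : orderOf σ = n) :
    LinearIndependent K fun j : Fin n => ⇑(σ ^ (j : ℕ)) := by
  have hinj : Injective fun j : Fin n => ((σ ^ (j : ℕ) : K →+* K) : K →* K) := fun i j hij =>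
    Fin.ext <| pow_injOn_Iio_orderOf (by simp [hσ]) (by simp [hσ])
      (RingHom.coe_monoidHom_injective hij)
  exact (linearIndependent_monoidHom K K).comp _ hinj

variable [NeZero n]

theorem dicksonMatrix_mulVec (hσ : σ ^ n = 1) (a : Fin n → K) (x : K) :
    dicksonMatrix σ a *ᵥ (fun k : Fin n => (σ ^ (k : ℕ)) x) =
      fun j : Fin n => (σ ^ (j : ℕ)) (linearizedMap σ a x) := by
  ext j
  have hpow (k : Fin n) : (σ ^ (j : ℕ)) ((σ ^ ((k - j : Fin n) : ℕ)) x) = (σ ^ (k : ℕ)) x := by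
    rw [← RingHom.comp_apply, ← RingHom.mul_def, ← pow_add, pow_eq_pow_mod _ hσ, ← Fin.val_add,
      add_sub_cancel]
  simp only [mulVec, dotProduct, dicksonMatrix, of_apply, linearizedMap, AddMonoidHom.coe_mk,
    ZeroHom.coe_mk, map_sum, map_mul]
  exact Fintype.sum_equiv (Equiv.subRight j) _ _ fun k => by rw [Equiv.subRight_apply, hpow]

theorem injective_linearizedMap_of_det_ne_zero (hσ : σ ^ n = 1) {a : Fin n → K}
    (hdet : (dicksonMatrix σ a).det ≠ 0) : Injective (linearizedMap σ a) := by
  refine (injective_iff_map_eq_zero _).mpr fun x hx => ?_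
  have hv := eq_zero_of_mulVec_eq_zero hdet (v := fun k : Fin n => (σ ^ (k : ℕ)) x)
    (by rw [dicksonMatrix_mulVec hσ, hx]; exact funext fun _ => map_zero _)
  simpa using congrFun hv 0

theorem det_dicksonMatrix_ne_zero_of_surjective (hσ : orderOf σ = n) {a : Fin n → K}
    (hsurj : Surjective (linearizedMap σ a)) : (dicksonMatrix σ a).det ≠ 0 := by
  intro hdet
  obtain ⟨w, hw, hwM⟩ := exists_vecMul_eq_zero_iff.mpr hdet
  have hvanish (x : K) : ∑ j, w j • (σ ^ (j : ℕ)) (linearizedMap σ a x) = 0 := by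
    have := dotProduct_mulVec w (dicksonMatrix σ a) fun k : Fin n => (σ ^ (k : ℕ)) x
    rwa [dicksonMatrix_mulVec (hσ ▸ pow_orderOf_eq_one σ), hwM, zero_dotProduct] at this
  have hli := linearIndependent_pow_of_orderOf_eq hσ
  rw [Fintype.linearIndependent_iff] at hli
  refine hw <| funext <| hli w <| funext fun y => ?_
  obtain ⟨x, rfl⟩ := hsurj y
  rw [Finset.sum_apply]
  exact hvanish x

theorem bijective_linearizedMap_iff_det_ne_zero [Finite K] (hσ : orderOf σ = n)
    (a : Fin n → K) : Bijective (linearizedMap σ a) ↔ (dicksonMatrix σ a).det ≠ 0 :=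
  ⟨fun h => det_dicksonMatrix_ne_zero_of_surjective hσ h.2, fun h =>
    Finite.injective_iff_bijective.mp <|
      injective_linearizedMap_of_det_ne_zero (hσ ▸ pow_orderOf_eq_one σ) h⟩

end Dickson

section Frobenius

variable {K : Type*} [Field K] [Finite K] (p : ℕ) [Fact p.Prime] [CharP K p]

theorem orderOf_frobenius_eq_finrank [Algebra (ZMod p) K] :
    orderOf (frobenius K p) = Module.finrank (ZMod p) K := by
  rw [← FiniteField.orderOf_frobeniusAlgHom (ZMod p) K, orderOf_eq_orderOf_iff]
  intro k
  simp only [← iterateFrobenius_eq_pow, DFunLike.ext_iff, iterateFrobenius_def, AlgHom.coe_pow,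
    FiniteField.coe_frobeniusAlgHom, ZMod.card, RingHom.one_def, RingHom.id_apply,
    AlgHom.one_apply, pow_iterate]

theorem orderOf_iterateFrobenius_galoisField {k m : ℕ} (hk : k ≠ 0) (hm : m ≠ 0) :
    orderOf (iterateFrobenius (GaloisField p (k * m)) p m) = k := by
  rw [iterateFrobenius_eq_pow, orderOf_pow' _ hm, orderOf_frobenius_eq_finrank,
    GaloisField.finrank p (mul_ne_zero hk hm), Nat.gcd_mul_left_left,
    Nat.mul_div_cancel _ (Nat.pos_of_ne_zero hm)]

end Frobenius

section CharTwo

variable {K : Type*} [Field K] [CharP K 2] (σ : K →+* K)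

theorem add_map_add_eq_linearizedMap_add (ε x : K) :
    σ (x + ε) * (x + ε) + σ (σ (x + ε)) * σ (x + ε) + (σ x * x + σ (σ x) * σ x) + ε * x =
      linearizedMap σ ![ε + σ ε, ε + σ (σ ε), σ ε] x + (σ ε * ε + σ (σ ε) * σ ε) := by
  simp only [linearizedMap, AddMonoidHom.coe_mk, ZeroHom.coe_mk, Fin.sum_univ_three,
    RingHom.coe_pow, map_add, Fin.isValue, cons_val_zero, Fin.coe_ofNat_eq_mod, Nat.zero_mod,
    iterate_zero, id_eq, cons_val_one, Nat.one_mod, cons_val, Nat.mod_succ,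
    iterate_succ, Function.comp_apply]
  linear_combination (σ x * x + σ x * σ (σ x)) * CharTwo.two_eq_zero (R := K)

theorem det_dicksonMatrix_eq_norm_add_trace (hσ : σ ^ 3 = 1) (ε : K) :
    (dicksonMatrix σ ![ε + σ ε, ε + σ (σ ε), σ ε]).det =
      ε * σ ε * σ (σ ε) +
        (ε ^ 3 + ε * σ ε ^ 2 + σ (ε ^ 3 + ε * σ ε ^ 2) + σ (σ (ε ^ 3 + ε * σ ε ^ 2))) := by
  have hσ3 (x : K) : σ (σ (σ x)) = x := by
    simpa [RingHom.coe_pow] using congr($hσ x)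
  simp only [dicksonMatrix, RingHom.coe_pow, det_fin_three, Fin.isValue, of_apply,
    Fin.coe_ofNat_eq_mod, Nat.zero_mod, sub_self, cons_val_zero, iterate_map_add, iterate_zero,
    id_eq, Nat.one_mod, map_add, Nat.mod_succ, iterate_succ, Function.comp_apply, hσ3,
    Fin.reduceSub, cons_val_one, cons_val, sub_zero, zero_sub, map_pow, map_mul]
  linear_combination (2 * ε * σ ε * σ (σ ε) - ε ^ 3 - σ ε ^ 3 - σ (σ ε) ^ 3) *
    CharTwo.two_eq_zero (R := K)

end CharTwo

/-- The function `f(x) = x^(2^m+1) + x^(2^(2m)+2^m)` on `F = 𝔽_{2^(3m)}` is pseudo-planar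
if and only if `N₃(ε) + Tr₃(ε³ + ε^(1+2^(m+1))) ≠ 0` for every `ε ≠ 0`, where
`Tr₃(x) = x + x^(2^m) + x^(2^(2m))` and `N₃(x) = x^(1+2^m+2^(2m))`. -/
theorem pseudoPlanar_iff_norm_trace_condition₁
    (m : ℕ) (hm : 0 < m)
    (Tr₃ N₃ : GaloisField 2 (3 * m) → GaloisField 2 (3 * m))
    (hTr : ∀ x, Tr₃ x = x + x ^ 2 ^ m + x ^ 2 ^ (2 * m))
    (hN : ∀ x, N₃ x = x ^ (1 + 2 ^ m + 2 ^ (2 * m)))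
    (f : GaloisField 2 (3 * m) → GaloisField 2 (3 * m))
    (hf : ∀ x, f x = x ^ (2 ^ m + 1) + x ^ (2 ^ (2 * m) + 2 ^ m)) :
    (∀ ε : GaloisField 2 (3 * m), ε ≠ 0 →
        Function.Bijective (fun x => f (x + ε) + f x + ε * x)) ↔
    (∀ ε : GaloisField 2 (3 * m), ε ≠ 0 →
        N₃ ε + Tr₃ (ε ^ 3 + ε ^ (1 + 2 ^ (m + 1))) ≠ 0) := by
  set σ := iterateFrobenius (GaloisField 2 (3 * m)) 2 m
  have hσ : orderOf σ = 3 := orderOf_iterateFrobenius_galoisField 2 three_ne_zero hm.ne'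
  have hσ1 (y) : y ^ 2 ^ m = σ y := rfl
  have hσ2 (y) : y ^ 2 ^ (2 * m) = σ (σ y) := by
    rw [two_mul, pow_add, pow_mul]; rfl
  have hshift (ε x) : f (x + ε) + f x + ε * x =
      linearizedMap σ ![ε + σ ε, ε + σ (σ ε), σ ε] x + (σ ε * ε + σ (σ ε) * σ ε) := by
    rw [hf, hf, pow_succ, pow_succ, pow_add, pow_add, hσ1, hσ1, hσ2, hσ2]
    exact add_map_add_eq_linearizedMap_add σ ε x
  have hdet (ε) : N₃ ε + Tr₃ (ε ^ 3 + ε ^ (1 + 2 ^ (m + 1))) =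
      (dicksonMatrix σ ![ε + σ ε, ε + σ (σ ε), σ ε]).det := by
    have hnorm : ε ^ (1 + 2 ^ m + 2 ^ (2 * m)) = ε * σ ε * σ (σ ε) := by
      rw [pow_add, pow_add, pow_one, hσ1, hσ2]
    have hexp : ε ^ (1 + 2 ^ (m + 1)) = ε * σ ε ^ 2 := by
      rw [pow_add, pow_one, pow_succ, pow_mul, hσ1]
    rw [det_dicksonMatrix_eq_norm_add_trace σ
      ((congrArg (σ ^ ·) hσ).symm.trans (pow_orderOf_eq_one σ)), hN, hTr, hnorm, hexp, hσ2, hσ1]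
  refine forall₂_congr fun ε _ => ?_
  rw [funext (hshift ε), hdet]
  exact ((Equiv.addRight _).bijective.of_comp_iff' _).trans
    (bijective_linearizedMap_iff_det_ne_zero hσ _)
end

section
/- Let m be a positive integer with m ≢ 2 (mod 3), and let F = 𝔽_{2^{3m}}. Then the function f : F → F defined by f(x) = x^{2^m+1} + x^{2^{2m}+2^m} is pseudo-planar on F. -/
/-!
With `φ x = x ^ 2 ^ m`, an automorphism of order dividing 3, we have `f x = φx x + φ²x φx`, and
`x ↦ f (x + ε) + f x + ε x` is additive up to a constant, with linear part
`L u = φε φ²u + (ε + φ²ε) φu + (ε + φε) u`. Applying `φ` to `L u = 0` yields three linear equations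
in `u, φu, φ²u` whose determinant is the cubic form `N(ε, φε, φ²ε)`, the norm form of `𝔽₈ / 𝔽₂`.
Over a root `y ∈ 𝔽₈` of `X³ + X + 1` it splits into the conjugate factors `ε + w φε + w⁵ φ²ε`,
`w ∈ {y, y², y⁴}`. As `m ≢ 2 (mod 3)`, `φ` acts on `𝔽₈` as the identity or as `w ↦ w²`, and in
both cases applying `φ` to a vanishing factor gives a nonsingular system forcing `ε = 0`.
-/

section CubicNorm

variable {R : Type*} [CommRing R] [CharP R 2]

def cubicNorm (a b c : R) : R :=
  a ^ 3 + b ^ 3 + c ^ 3 + a * b * c + a ^ 2 * c + a * b ^ 2 + b * c ^ 2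

/-- For `w³ = w + 1` this is `a + w b + w⁵ c`. -/
def normFactor (w a b c : R) : R := a + w * b + (w ^ 2 + w + 1) * c

theorem cubicNorm_mul_eq_zero {a b c u v w : R}
    (h₁ : b * w + (a + c) * v + (a + b) * u = 0)
    (h₂ : c * u + (b + a) * w + (b + c) * v = 0)
    (h₃ : a * v + (c + b) * u + (c + a) * w = 0) :
    cubicNorm a b c * u = 0 := by
  unfold cubicNorm
  grind

theorem cubicNorm_eq_mul_normFactor {y : R} (hy : y ^ 3 = y + 1) (a b c : R) :
    cubicNorm a b c =
      normFactor y a b c * normFactor (y ^ 2) a b c * normFactor ((y ^ 2) ^ 2) a b c := by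
  unfold cubicNorm normFactor
  grind

end CubicNorm

section OrderThree

variable {K : Type*} [Field K] [CharP K 2] {φ : K →+* K}

theorem eq_zero_of_normFactor_eq_zero {a w : K} (ha : φ (φ (φ a)) = a) (hw : w ^ 3 = w + 1)
    (hφw : φ w = w ∨ φ w = w ^ 2) (h : normFactor w a (φ a) (φ (φ a)) = 0) : a = 0 := by
  have h' := congrArg φ h
  have h'' := congrArg φ h'
  simp only [normFactor, map_add, map_mul, map_pow, map_one, map_zero, ha] at h h' h''
  rcases hφw with hφw | hφw <;> simp only [hφw, map_pow] at h' h'' <;> grind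

theorem cubicNorm_ne_zero (hφ : ∀ x, φ (φ (φ x)) = x) {y : K} (hy : y ^ 3 = y + 1)
    (hφy : φ y = y ∨ φ y = y ^ 2) {a : K} (ha : a ≠ 0) :
    cubicNorm a (φ a) (φ (φ a)) ≠ 0 := by
  have hsq : ∀ w : K, w ^ 3 = w + 1 ∧ (φ w = w ∨ φ w = w ^ 2) →
      (w ^ 2) ^ 3 = w ^ 2 + 1 ∧ (φ (w ^ 2) = w ^ 2 ∨ φ (w ^ 2) = (w ^ 2) ^ 2) := by
    rintro w ⟨hw, hφw | hφw⟩ <;> refine ⟨by grind, ?_⟩ <;> simp [map_pow, hφw]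
  have hfactor : ∀ w : K, w ^ 3 = w + 1 ∧ (φ w = w ∨ φ w = w ^ 2) →
      normFactor w a (φ a) (φ (φ a)) ≠ 0 := fun w hw h =>
    ha (eq_zero_of_normFactor_eq_zero (hφ a) hw.1 hw.2 h)
  have hy₂ := hsq y ⟨hy, hφy⟩
  rw [cubicNorm_eq_mul_normFactor hy]
  exact mul_ne_zero (mul_ne_zero (hfactor y ⟨hy, hφy⟩) (hfactor _ hy₂)) (hfactor _ (hsq _ hy₂))

def PseudoPlanar (f : K → K) : Prop :=
  ∀ ε, ε ≠ 0 → Function.Bijective fun x => f (x + ε) + f x + ε * x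

theorem pseudoPlanar_map_mul_add_map_map_mul_map [Finite K] (hφ : ∀ x, φ (φ (φ x)) = x)
    {y : K} (hy : y ^ 3 = y + 1) (hφy : φ y = y ∨ φ y = y ^ 2) :
    PseudoPlanar fun x => φ x * x + φ (φ x) * φ x := by
  intro ε hε
  refine Finite.injective_iff_bijective.mp fun x₁ x₂ hx => ?_
  set u := x₁ - x₂ with hu
  have h₁ : φ ε * φ (φ u) + (ε + φ (φ ε)) * φ u + (ε + φ ε) * u = 0 := by
    simp only [map_add, map_sub, hu] at hx ⊢
    grind
  have h₂ := congrArg φ h₁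
  have h₃ := congrArg φ h₂
  simp only [map_add, map_mul, map_zero, hφ] at h₂ h₃
  rw [← sub_eq_zero]
  exact (mul_eq_zero.mp (cubicNorm_mul_eq_zero h₁ h₂ h₃)).resolve_left
    (cubicNorm_ne_zero hφ hy hφy hε)

end OrderThree

theorem pow_pow_eq_pow_pow_mod {M : Type*} [Monoid M] {x : M} {p k : ℕ} (h : x ^ p ^ k = x)
    (n : ℕ) : x ^ p ^ n = x ^ p ^ (n % k) := by
  have hx : Function.IsPeriodicPt (· ^ p) k x := by
    simpa [Function.IsPeriodicPt, Function.IsFixedPt, pow_iterate] using h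
  simpa [pow_iterate] using (hx.iterate_mod_apply n).symm

theorem exists_pow_three_eq_add_one_of_seven_dvd {K : Type*} [Field K] [Finite K] [CharP K 2]
    (h : 7 ∣ Nat.card Kˣ) : ∃ y : K, y ^ 3 = y + 1 := by
  have : Fact (Nat.Prime 7) := ⟨by norm_num⟩
  obtain ⟨g, hg⟩ := exists_prime_orderOf_dvd_card' 7 h
  have h7 : (g : K) ^ 7 = 1 := by
    rw [← Units.val_pow_eq_pow_val, ← hg, pow_orderOf_eq_one, Units.val_one]
  have h1 : (g : K) ≠ 1 := by
    rw [Ne, Units.val_eq_one, ← orderOf_eq_one_iff, hg]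
    norm_num
  -- `X⁷ - 1 = (X - 1)(X³ + X + 1)(X³ + X² + 1)` over `𝔽₂`, and `g⁻¹` is a root of the first
  -- cubic factor when `g` is a root of the second.
  by_cases hg3 : (g : K) ^ 3 = g + 1
  · exact ⟨g, hg3⟩
  · exact ⟨(g : K)⁻¹, by grind⟩

namespace GaloisField

theorem pow_pow_self (p : ℕ) [Fact p.Prime] (n : ℕ) (x : GaloisField p n) : x ^ p ^ n = x := by
  rcases eq_or_ne n 0 with rfl | hn
  · rw [pow_zero, pow_one]
  have := Fintype.ofFinite (GaloisField p n)
  rw [← GaloisField.card p n hn, Nat.card_eq_fintype_card, FiniteField.pow_card]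

theorem exists_pow_three_eq_add_one {m : ℕ} (hm : m ≠ 0) :
    ∃ y : GaloisField 2 (3 * m), y ^ 3 = y + 1 := by
  refine exists_pow_three_eq_add_one_of_seven_dvd ?_
  rw [Nat.card_units, GaloisField.card 2 _ (by omega), pow_mul]
  simpa using Nat.sub_dvd_pow_sub_pow 8 1 m

end GaloisField

/-- **Proposition.** Let `m` be a positive integer with `m ≢ 2 (mod 3)` and `F = 𝔽_{2^(3m)}`.
Then `f(x) = x^(2^m+1) + x^(2^(2m)+2^m)` is pseudo-planar on `F`, i.e. for every `ε ≠ 0`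
the map `x ↦ f(x+ε) + f(x) + ε·x` is a bijection of `F`. -/
theorem pseudoPlanar_binomial_of_mod_three_ne_two
    (m : ℕ) (hm : 0 < m) (hm3 : m % 3 ≠ 2)
    (f : GaloisField 2 (3 * m) → GaloisField 2 (3 * m))
    (hf : ∀ x, f x = x ^ (2 ^ m + 1) + x ^ (2 ^ (2 * m) + 2 ^ m)) :
    ∀ ε : GaloisField 2 (3 * m), ε ≠ 0 →
      Function.Bijective (fun x => f (x + ε) + f x + ε * x) := by
  let φ := iterateFrobenius (GaloisField 2 (3 * m)) 2 m
  have hφ : ∀ x, φ (φ (φ x)) = x := fun x => by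
    simp only [φ, iterateFrobenius_def, ← pow_mul, ← pow_add]
    convert GaloisField.pow_pow_self 2 (3 * m) x using 2
    ring
  obtain ⟨y, hy⟩ := GaloisField.exists_pow_three_eq_add_one hm.ne'
  have hφy : φ y = y ∨ φ y = y ^ 2 := by
    have h8 : y ^ 2 ^ 3 = y := by grind
    rw [iterateFrobenius_def, pow_pow_eq_pow_pow_mod h8]
    rcases (by omega : m % 3 = 0 ∨ m % 3 = 1) with h | h <;> simp [h]
  have hfφ : f = fun x => φ x * x + φ (φ x) * φ x := funext fun x => by
    simp only [hf, φ, iterateFrobenius_def, ← pow_mul, ← pow_succ, ← pow_add]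
    ring_nf
  rw [hfφ]
  exact pseudoPlanar_map_mul_add_map_map_mul_map hφ hy hφy
end

section
/- Let m be a positive integer with m ≢ 2 (mod 3), and let F = 𝔽_{2^{3m}}. Then for every ε ∈ F with ε ≠ 0 one has ε^{1+2^m+2^{2m}} + Tr₃(ε^{3} + ε^{1+2^{m+1}}) ≠ 0. -/
/-!
Write `σ x = x ^ 2 ^ m`, so that `σ³ = id` on `F`, and put `A, B, C = ε, σ ε, σ² ε`. The expression
is the cubic form `ABC + A³ + B³ + C³ + AB² + BC² + CA²`, which is the norm form of `𝔽₈ / 𝔽₂` and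
splits into the conjugate linear forms `A + zB + z⁵C`, `z` running over the roots `ω, ω², ω⁴` of
`X³ + X + 1`; these roots lie in `F` because `3 ∣ 3m`. As `m ≢ 2 (mod 3)`, `2 ^ m ≡ 1` or
`2 (mod 7)`, so `σ z` is `z` or `z²`. Applying `σ` twice to a vanishing linear form then yields a
linear system in `A, B, C` whose determinant is a unit, hence `ε = 0`.
-/

section CharTwo

variable {R : Type*} [CommRing R] [CharP R 2]

theorem pow_seven_eq_one_of_cube_eq_add_one {z : R} (hz : z ^ 3 = z + 1) : z ^ 7 = 1 := by
  grind

theorem sq_cube_eq_sq_add_one {z : R} (hz : z ^ 3 = z + 1) : (z ^ 2) ^ 3 = z ^ 2 + 1 := by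
  grind

theorem exists_cube_eq_add_one_of_pow_seven_eq_one [IsDomain R] {v : R} (h7 : v ^ 7 = 1)
    (hv : v ≠ 1) : ∃ z : R, z ^ 3 = z + 1 := by
  have hfac : (v + 1) * ((v ^ 3 + v + 1) * (v ^ 3 + v ^ 2 + 1)) = 0 := by grind
  obtain h | h | h : v + 1 = 0 ∨ v ^ 3 + v + 1 = 0 ∨ v ^ 3 + v ^ 2 + 1 = 0 := by
    simpa only [mul_eq_zero] using hfac
  · exact absurd (by grind) hv
  · exact ⟨v, by grind⟩
  · -- `v⁻¹ = v⁶` is a root of the reciprocal polynomial `X³ + X + 1`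
    exact ⟨v ^ 6, by grind⟩

theorem cubic_form_eq_prod_of_cube_eq_add_one {z : R} (hz : z ^ 3 = z + 1) (A B C : R) :
    A * B * C + A ^ 3 + B ^ 3 + C ^ 3 + A * B ^ 2 + B * C ^ 2 + C * A ^ 2 =
      (A + z * B + z ^ 5 * C) * (A + z ^ 2 * B + (z ^ 2) ^ 5 * C) *
        (A + (z ^ 2) ^ 2 * B + ((z ^ 2) ^ 2) ^ 5 * C) := by
  grind

/-- The coefficient matrix is circulant with determinant `z⁶`, a unit since `z⁷ = 1`. -/
theorem eq_zero_of_circulant_system {z A B C : R} (hz : z ^ 3 = z + 1)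
    (h₁ : A + z * B + z ^ 5 * C = 0) (h₂ : B + z * C + z ^ 5 * A = 0)
    (h₃ : C + z * A + z ^ 5 * B = 0) : A = 0 := by
  grind

/-- The coefficient matrix has determinant `1`. -/
theorem eq_zero_of_twisted_system {z A B C : R} (hz : z ^ 3 = z + 1)
    (h₁ : A + z * B + z ^ 5 * C = 0) (h₂ : B + z ^ 2 * C + (z ^ 2) ^ 5 * A = 0)
    (h₃ : C + (z ^ 2) ^ 2 * A + ((z ^ 2) ^ 2) ^ 5 * B = 0) : A = 0 := by
  grind

end CharTwo

section RingHom

variable {R : Type*} [CommRing R] (σ : R →+* R)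

theorem map_sq_eq_self_or_eq_sq {z : R} (h : σ z = z ∨ σ z = z ^ 2) :
    σ (z ^ 2) = z ^ 2 ∨ σ (z ^ 2) = (z ^ 2) ^ 2 := by
  rw [map_pow]
  rcases h with h | h <;> simp only [h, true_or, or_true]

theorem eq_zero_of_linear_form_eq_zero [CharP R 2] {z ε : R} (hz : z ^ 3 = z + 1)
    (hσz : σ z = z ∨ σ z = z ^ 2) (hσε : σ (σ (σ ε)) = ε)
    (h : ε + z * σ ε + z ^ 5 * σ (σ ε) = 0) : ε = 0 := by
  have h₂ := congrArg σ h
  have h₃ := congrArg σ h₂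
  simp only [map_add, map_mul, map_pow, map_zero, hσε] at h₂ h₃
  rcases hσz with hσz | hσz <;> simp only [hσz, map_pow] at h₂ h₃
  · exact eq_zero_of_circulant_system hz h h₂ h₃
  · exact eq_zero_of_twisted_system hz h h₂ h₃

end RingHom

theorem norm_add_trace_ne_zero_of_cube_eq_add_one {K : Type*} [Field K] [CharP K 2]
    (σ : K →+* K) {ω ε : K} (hω : ω ^ 3 = ω + 1) (hσω : σ ω = ω ∨ σ ω = ω ^ 2)
    (hσε : σ (σ (σ ε)) = ε) (hε : ε ≠ 0) :
    ε * σ ε * σ (σ ε) + ((ε ^ 3 + ε * σ ε ^ 2) + σ (ε ^ 3 + ε * σ ε ^ 2) +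
      σ (σ (ε ^ 3 + ε * σ ε ^ 2))) ≠ 0 := by
  have hσω₂ := map_sq_eq_self_or_eq_sq σ hσω
  have hσω₄ := map_sq_eq_self_or_eq_sq σ hσω₂
  have hω₂ := sq_cube_eq_sq_add_one hω
  have hω₄ := sq_cube_eq_sq_add_one hω₂
  have hcubic : ε * σ ε * σ (σ ε) + ((ε ^ 3 + ε * σ ε ^ 2) + σ (ε ^ 3 + ε * σ ε ^ 2) +
      σ (σ (ε ^ 3 + ε * σ ε ^ 2))) = ε * σ ε * σ (σ ε) + ε ^ 3 + σ ε ^ 3 + σ (σ ε) ^ 3 +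
      ε * σ ε ^ 2 + σ ε * σ (σ ε) ^ 2 + σ (σ ε) * ε ^ 2 := by
    simp only [map_add, map_mul, map_pow, hσε]
    ring
  rw [hcubic, cubic_form_eq_prod_of_cube_eq_add_one hω]
  refine mul_ne_zero (mul_ne_zero ?_ ?_) ?_ <;> refine fun h ↦ hε ?_
  · exact eq_zero_of_linear_form_eq_zero σ hω hσω hσε h
  · exact eq_zero_of_linear_form_eq_zero σ hω₂ hσω₂ hσε h
  · exact eq_zero_of_linear_form_eq_zero σ hω₄ hσω₄ hσε h

theorem exists_cube_eq_add_one_of_seven_dvd {K : Type*} [Field K] [Finite K] [CharP K 2]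
    (h : 7 ∣ Nat.card K - 1) : ∃ z : K, z ^ 3 = z + 1 := by
  have : Fact (Nat.Prime 7) := ⟨by norm_num⟩
  obtain ⟨u, hu⟩ := exists_prime_orderOf_dvd_card' 7 (by rwa [Nat.card_units K])
  refine exists_cube_eq_add_one_of_pow_seven_eq_one (v := (u : K)) ?_ ?_
  · rw [← Units.val_pow_eq_pow_val, ← hu, pow_orderOf_eq_one, Units.val_one]
  · rw [Ne, Units.val_eq_one, ← orderOf_eq_one_iff, hu]
    norm_num

theorem two_pow_mod_seven (m : ℕ) : 2 ^ m % 7 = 2 ^ (m % 3) % 7 := by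
  conv_lhs => rw [← Nat.div_add_mod m 3, pow_add, pow_mul, Nat.mul_mod, Nat.pow_mod]
  norm_num

/-- Let `m` be a positive integer with `m ≢ 2 (mod 3)` and `F = 𝔽_{2^(3m)}`. Then for every
`ε ∈ F`, `ε ≠ 0`, one has `ε^(1+2^m+2^(2m)) + Tr₃(ε³ + ε^(1+2^(m+1))) ≠ 0`, where
`Tr₃(x) = x + x^(2^m) + x^(2^(2m))`. -/
theorem norm_add_trace_ne_zero_of_mod_three_ne_two
    (m : ℕ) (hm : 0 < m) (hm3 : m % 3 ≠ 2)
    (Tr₃ : GaloisField 2 (3 * m) → GaloisField 2 (3 * m))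
    (hTr : ∀ x, Tr₃ x = x + x ^ 2 ^ m + x ^ 2 ^ (2 * m)) :
    ∀ ε : GaloisField 2 (3 * m), ε ≠ 0 →
      ε ^ (1 + 2 ^ m + 2 ^ (2 * m)) + Tr₃ (ε ^ 3 + ε ^ (1 + 2 ^ (m + 1))) ≠ 0 := by
  intro ε hε
  have hcard : Nat.card (GaloisField 2 (3 * m)) = 2 ^ (3 * m) :=
    GaloisField.card 2 (3 * m) (by omega)
  let σ := iterateFrobenius (GaloisField 2 (3 * m)) 2 m
  have hσ : ∀ x, x ^ 2 ^ m = σ x := fun x ↦ (iterateFrobenius_def 2 m x).symm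
  have hσσ : ∀ x, x ^ 2 ^ (2 * m) = σ (σ x) := fun x ↦ by
    rw [two_mul, pow_add, pow_mul, hσ, hσ]
  have hσσσ : σ (σ (σ ε)) = ε := by
    have := Fintype.ofFinite (GaloisField 2 (3 * m))
    rw [← hσσ, ← hσ, ← pow_mul, ← pow_add, show m + 2 * m = 3 * m by ring, ← hcard,
      Nat.card_eq_fintype_card, FiniteField.pow_card]
  obtain ⟨ω, hω⟩ := exists_cube_eq_add_one_of_seven_dvd (K := GaloisField 2 (3 * m))
    (by simpa [hcard, pow_mul] using Nat.sub_dvd_pow_sub_pow 8 1 m)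
  have hσω : σ ω = ω ∨ σ ω = ω ^ 2 := by
    rw [← hσ, pow_eq_pow_mod _ (pow_seven_eq_one_of_cube_eq_add_one hω), two_pow_mod_seven]
    rcases (by omega : m % 3 = 0 ∨ m % 3 = 1) with h | h <;> simp [h]
  have hnorm : ε ^ (1 + 2 ^ m + 2 ^ (2 * m)) = ε * σ ε * σ (σ ε) := by
    rw [pow_add, pow_add, pow_one, hσ, hσσ]
  have harg : ε ^ (1 + 2 ^ (m + 1)) = ε * σ ε ^ 2 := by
    rw [pow_add, pow_one, pow_succ, pow_mul, hσ]
  rw [hnorm, harg, hTr, hσ, hσσ]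
  exact norm_add_trace_ne_zero_of_cube_eq_add_one σ hω hσω hσσσ hε
end

section
/- Let m be a positive integer with m ≢ 1 (mod 3), and let F = 𝔽_{2^{3m}}. Then the function f : F → F defined by f(x) = x^{2^{2m}+1} + x^{2^{2m}+2^m} is pseudo-planar on F. -/
/-!
With `σ x = x ^ 2 ^ m`, an automorphism of order 3, `f x = σ² x * (x + σ x)` and
`x ↦ f (x + ε) + f x + ε x` is an additive map `L_ε` plus the constant `f ε`. If `L_ε p = 0`
with `p ≠ 0`, the equations `L_ε p = 0`, `σ (L_ε p) = 0`, `σ² (L_ε p) = 0` force a determinant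
`D(ε, σ ε, σ² ε)` to vanish, and `D` factors as `∏ (ε + η σ ε + η³ σ² ε)` over the three roots
`η ∈ 𝔽₈ ⊆ F` of `X³ + X² + 1`. As `m ≢ 1 (mod 3)`, `σ` acts on these roots as `η ↦ η` or
`η ↦ η⁴`; in both cases `ε + η σ ε + η³ σ² ε = 0` and its `σ`-conjugates form a linear system
in `ε, σ ε, σ² ε` with nonzero determinant, so `ε = 0`.
-/

variable {K : Type*}

lemma pow_two_pow_eq_pow_two_pow_mod_three [Monoid K] {η : K} (hη : η ^ 7 = 1) (m : ℕ) :
    η ^ 2 ^ m = η ^ 2 ^ (m % 3) := by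
  rw [pow_eq_pow_mod _ hη, pow_eq_pow_mod (2 ^ (m % 3)) hη]
  conv_lhs => rw [← Nat.mod_add_div m 3, pow_add, pow_mul]
  simp [Nat.mul_mod, Nat.pow_mod]

section Cubic

variable [CommRing K] [CharP K 2] {θ : K}

lemma pow_seven_eq_one_of_cubic (hθ : θ ^ 3 + θ ^ 2 + 1 = 0) : θ ^ 7 = 1 := by
  linear_combination (norm := (ring_nf; reduce_mod_char!)) (θ ^ 4 + θ ^ 3 + θ ^ 2 + 1) * hθ

lemma cubic_root_sq (hθ : θ ^ 3 + θ ^ 2 + 1 = 0) : (θ ^ 2) ^ 3 + (θ ^ 2) ^ 2 + 1 = 0 := by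
  linear_combination (norm := (ring_nf; reduce_mod_char!)) (θ ^ 3 + θ ^ 2 + 1) * hθ

def cubicForm (a b c : K) : K :=
  a ^ 3 + b ^ 3 + c ^ 3 + a ^ 2 * b + b ^ 2 * c + c ^ 2 * a + a * b * c

lemma cubicForm_eq_mul (hθ : θ ^ 3 + θ ^ 2 + 1 = 0) (a b c : K) :
    cubicForm a b c = (a + θ * b + θ ^ 3 * c) * (a + θ ^ 2 * b + (θ ^ 2) ^ 3 * c) *
      (a + θ ^ 4 * b + (θ ^ 4) ^ 3 * c) := by
  unfold cubicForm
  linear_combination (norm := (ring_nf; reduce_mod_char!))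
    (θ ^ 18 * c ^ 3 + θ ^ 17 * c ^ 3 + θ ^ 16 * b * c ^ 2 + θ ^ 16 * c ^ 3 + θ ^ 15 * a * c ^ 2
      + θ ^ 15 * b * c ^ 2 + θ ^ 14 * a * c ^ 2 + θ ^ 14 * c ^ 3 + θ ^ 13 * a * c ^ 2
      + θ ^ 13 * b * c ^ 2 + θ ^ 12 * a * c ^ 2 + θ ^ 12 * b ^ 2 * c + θ ^ 11 * a * b * c
      + θ ^ 11 * b ^ 2 * c + θ ^ 11 * c ^ 3 + θ ^ 10 * a * c ^ 2 + θ ^ 10 * b ^ 2 * c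
      + θ ^ 10 * c ^ 3 + θ ^ 9 * a ^ 2 * c + θ ^ 9 * c ^ 3 + θ ^ 8 * a ^ 2 * c + θ ^ 8 * a * b * c
      + θ ^ 7 * a ^ 2 * c + θ ^ 7 * a * c ^ 2 + θ ^ 7 * b ^ 2 * c + θ ^ 7 * c ^ 3
      + θ ^ 5 * a ^ 2 * c + θ ^ 5 * a * b * c + θ ^ 4 * a * b * c + θ ^ 4 * a * c ^ 2
      + θ ^ 4 * b ^ 3 + θ ^ 4 * b ^ 2 * c + θ ^ 4 * c ^ 3 + θ ^ 3 * a ^ 2 * c + θ ^ 3 * a * b ^ 2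
      + θ ^ 3 * a * b * c + θ ^ 3 * a * c ^ 2 + θ ^ 3 * b ^ 3 + θ ^ 3 * b ^ 2 * c + θ ^ 3 * c ^ 3
      + θ ^ 2 * a * b * c + θ ^ 2 * a * c ^ 2 + θ ^ 2 * b ^ 3 + θ ^ 2 * b ^ 2 * c + θ ^ 2 * c ^ 3
      + θ * a ^ 2 * b + a ^ 2 * b + a * b * c + a * c ^ 2 + b ^ 3 + b ^ 2 * c + c ^ 3) * hθ

end Cubic

lemma exists_cubic_root [Field K] [Finite K] [CharP K 2] (hK : 7 ∣ Nat.card K - 1) :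
    ∃ θ : K, θ ^ 3 + θ ^ 2 + 1 = 0 := by
  have : Fact (Nat.Prime 7) := ⟨by norm_num⟩
  obtain ⟨g, hg⟩ := exists_prime_orderOf_dvd_card' (G := Kˣ) 7 (by rwa [Nat.card_units])
  have hg7 : (g : K) ^ 7 = 1 := by
    rw [← Units.val_pow_eq_pow_val, ← hg, pow_orderOf_eq_one, Units.val_one]
  have hg1 : (g : K) ≠ 1 := fun h => by
    rw [Units.val_eq_one.1 h, orderOf_one] at hg
    norm_num at hg
  set x : K := (g : K)
  have hfactor : (x - 1) * ((x ^ 3 + x + 1) * (x ^ 3 + x ^ 2 + 1)) = 0 := by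
    linear_combination (norm := (ring_nf; reduce_mod_char!)) hg7
  rcases mul_eq_zero.1 ((mul_eq_zero.1 hfactor).resolve_left (sub_ne_zero.2 hg1)) with h | h
  · -- `x ^ 6 = x⁻¹` is a root of the reciprocal polynomial
    refine ⟨x ^ 6, ?_⟩
    linear_combination (norm := (ring_nf; reduce_mod_char!))
      (x ^ 15 + x ^ 13 + x ^ 12 + x ^ 11 + x ^ 9 + x ^ 8 + x ^ 7 + x ^ 4 + x ^ 2 + x + 1) * h
  · exact ⟨x, h⟩

section Twisted

variable [CommRing K] (σ : K →+* K)

def twistedBinomial (x : K) : K := σ (σ x) * (x + σ x)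

/-- The additive part of `x ↦ f (x + ε) + f x + ε * x` for `f = twistedBinomial σ`. -/
def pseudoDeriv (ε : K) : K →+ K where
  toFun x := (ε + σ ε) * σ (σ x) + σ (σ ε) * σ x + (σ (σ ε) + ε) * x
  map_zero' := by simp
  map_add' x y := by simp only [map_add]; ring

lemma twistedBinomial_add_add_mul [CharP K 2] (ε x : K) :
    twistedBinomial σ (x + ε) + twistedBinomial σ x + ε * x =
      pseudoDeriv σ ε x + twistedBinomial σ ε := by
  simp only [twistedBinomial, pseudoDeriv, AddMonoidHom.coe_mk, ZeroHom.coe_mk, map_add]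
  linear_combination (norm := (ring_nf; reduce_mod_char!))

variable {σ} [CharP K 2]

/-- Applying `σ` and `σ²` to `pseudoDeriv σ ε p = 0` gives a linear system in `p, σ p, σ² p`
whose determinant is `cubicForm ε (σ ε) (σ² ε)`. -/
lemma cubicForm_mul_eq_zero (hσ : ∀ x, σ (σ (σ x)) = x) {ε p : K} (hp : pseudoDeriv σ ε p = 0) :
    cubicForm ε (σ ε) (σ (σ ε)) * p = 0 := by
  simp only [pseudoDeriv, AddMonoidHom.coe_mk, ZeroHom.coe_mk] at hp
  have hp₁ := congrArg σ hp
  have hp₂ := congrArg σ hp₁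
  simp only [map_add, map_mul, map_zero, hσ] at hp₁ hp₂
  unfold cubicForm
  set a := ε; set b := σ ε; set c := σ (σ ε)
  linear_combination (norm := (ring_nf; reduce_mod_char!))
    (a ^ 2 + a * b + b ^ 2 + b * c) * hp + (c ^ 2 + a * c + a ^ 2 + a * b) * hp₁
      + (a * c + a ^ 2 + b ^ 2) * hp₂

lemma eq_zero_of_map_eq_self (hσ : ∀ x, σ (σ (σ x)) = x) {η a : K}
    (hη : η ^ 3 + η ^ 2 + 1 = 0) (hση : σ η = η) (h : a + η * σ a + η ^ 3 * σ (σ a) = 0) :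
    a = 0 := by
  have h₁ := congrArg σ h
  simp only [map_add, map_mul, map_pow, map_zero, hσ, hση] at h₁
  have h₂ := congrArg σ h₁
  simp only [map_add, map_mul, map_pow, map_zero, hσ, hση] at h₂
  linear_combination (norm := (ring_nf; reduce_mod_char!))
    η ^ 2 * h + (η + 1) * h₁ + (η ^ 2 + 1) * h₂
      + ((η ^ 2 + η + 1) * (σ a + σ (σ a)) + (η + 1) * a) * hη

lemma eq_zero_of_map_eq_pow_four (hσ : ∀ x, σ (σ (σ x)) = x) {η a : K}
    (hη : η ^ 3 + η ^ 2 + 1 = 0) (hση : σ η = η ^ 4) (h : a + η * σ a + η ^ 3 * σ (σ a) = 0) :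
    a = 0 := by
  have h₇ := pow_seven_eq_one_of_cubic hη
  have h₁ : η ^ 5 * a + σ a + η ^ 4 * σ (σ a) = 0 := by
    have := congrArg σ h
    simp only [map_add, map_mul, map_pow, map_zero, hσ, hση] at this
    linear_combination this - η ^ 5 * a * h₇
  have h₂ : η ^ 2 * a + η ^ 6 * σ a + σ (σ a) = 0 := by
    have := congrArg σ h₁
    simp only [map_add, map_mul, map_pow, map_zero, hσ, hση] at this
    linear_combination this - (η ^ 7 + 1) * (η ^ 2 * a + η ^ 6 * σ a) * h₇
  linear_combination (norm := (ring_nf; reduce_mod_char!))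
    η ^ 2 * h + (η ^ 2 + η) * h₁ + (η ^ 2 + η) * h₂
      + (η ^ 5 * σ a + η ^ 4 * a + η ^ 3 * σ (σ a) + (η ^ 2 + η) * (σ a + σ (σ a)) + a) * hη

lemma eq_zero_of_pseudoDeriv_eq_zero [IsDomain K] (hσ : ∀ x, σ (σ (σ x)) = x) {θ : K}
    (hθ : θ ^ 3 + θ ^ 2 + 1 = 0) (hroots : ∀ η : K, η ^ 3 + η ^ 2 + 1 = 0 → σ η = η ∨ σ η = η ^ 4)
    {ε p : K} (hε : ε ≠ 0) (hp : pseudoDeriv σ ε p = 0) : p = 0 := by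
  have hfactor_ne : ∀ η : K, η ^ 3 + η ^ 2 + 1 = 0 → ε + η * σ ε + η ^ 3 * σ (σ ε) ≠ 0 :=
    fun η hη h => hε <| (hroots η hη).elim
      (eq_zero_of_map_eq_self hσ hη · h) (eq_zero_of_map_eq_pow_four hσ hη · h)
  have hθ₂ := cubic_root_sq hθ
  have hθ₄ : (θ ^ 4) ^ 3 + (θ ^ 4) ^ 2 + 1 = 0 := by simpa only [← pow_mul] using cubic_root_sq hθ₂
  refine (mul_eq_zero.1 (cubicForm_mul_eq_zero hσ hp)).resolve_left ?_
  rw [cubicForm_eq_mul hθ]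
  exact mul_ne_zero (mul_ne_zero (hfactor_ne θ hθ) (hfactor_ne _ hθ₂)) (hfactor_ne _ hθ₄)

end Twisted

/-- **Proposition.** Let `m` be a positive integer with `m ≢ 1 (mod 3)` and `F = 𝔽_{2^(3m)}`.
Then `f(x) = x^(2^(2m)+1) + x^(2^(2m)+2^m)` is pseudo-planar on `F`, i.e. for every `ε ≠ 0`
the map `x ↦ f(x+ε) + f(x) + ε·x` is a bijection of `F`. -/
theorem pseudoPlanar_binomial_of_mod_three_ne_one
    (m : ℕ) (hm : 0 < m) (hm3 : m % 3 ≠ 1)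
    (f : GaloisField 2 (3 * m) → GaloisField 2 (3 * m))
    (hf : ∀ x, f x = x ^ (2 ^ (2 * m) + 1) + x ^ (2 ^ (2 * m) + 2 ^ m)) :
    ∀ ε : GaloisField 2 (3 * m), ε ≠ 0 →
      Function.Bijective (fun x => f (x + ε) + f x + ε * x) := by
  intro ε hε
  let σ := iterateFrobenius (GaloisField 2 (3 * m)) 2 m
  have hcard : Nat.card (GaloisField 2 (3 * m)) = 8 ^ m := by
    rw [GaloisField.card 2 (3 * m) (by omega), pow_mul]; norm_num
  have hσ : ∀ x, σ (σ (σ x)) = x := fun x => by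
    have := Fintype.ofFinite (GaloisField 2 (3 * m))
    simp only [σ, iterateFrobenius_def, ← pow_mul, ← mul_pow]
    rw [show 2 * 2 * 2 = 8 from rfl, ← hcard, ← Fintype.card_eq_nat_card, FiniteField.pow_card]
  have hroots : ∀ η, η ^ 3 + η ^ 2 + 1 = 0 → σ η = η ∨ σ η = η ^ 4 := fun η hη => by
    rw [iterateFrobenius_def, pow_two_pow_eq_pow_two_pow_mod_three (pow_seven_eq_one_of_cubic hη)]
    rcases (by omega : m % 3 = 0 ∨ m % 3 = 2) with h | h <;> simp [h]
  obtain ⟨θ, hθ⟩ := exists_cubic_root (K := GaloisField 2 (3 * m))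
    (by simpa [hcard] using Nat.sub_dvd_pow_sub_pow 8 1 m)
  have hf' : f = twistedBinomial σ := funext fun x => by
    rw [hf, twistedBinomial]; simp only [σ, iterateFrobenius_def]; ring
  have hinj : Function.Injective (pseudoDeriv σ ε) := (injective_iff_map_eq_zero _).2
    fun p hp => eq_zero_of_pseudoDeriv_eq_zero hσ hθ hroots hε hp
  simp only [hf', twistedBinomial_add_add_mul]
  exact (Equiv.addRight _).bijective.comp (Finite.injective_iff_bijective.1 hinj)
end

section
/- Let n be a positive integer, F = 𝔽_{2^n}, R = W₂(F) the ring of length-2 2-typical truncated Witt vectors over F, and let f : F → F be a pseudo-planar function with f(0) = 0. Then for every g ∈ R, the number of ordered pairs (x,y) ∈ S₁ × S₁ with x − y = g equals: 2^n − 1 if g = 0; 1 if g ∈ S₄ ∪ S₅; and 0 otherwise (i.e., if g ∈ S₁ ∪ S₂ ∪ S₃). -/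
open scoped Classical

noncomputable section

/-- The Galois ring `GR(4,n)`, realized as length-2 2-typical truncated Witt vectors
over `F = 𝔽_{2^n}`. -/
abbrev GR (n : ℕ) : Type := TruncatedWittVector 2 2 (GaloisField 2 n)

/-- The truncated Teichmüller lift `τ : F → W₂(F)`. -/
def teich (n : ℕ) (x : GaloisField 2 n) : GR n :=
  WittVector.truncate 2 (WittVector.teichmuller 2 x)

/-- The lifted set `D_f = {τ(x) + 2·τ(f(x)^(2^(n-1))) : x ∈ F} ⊆ GR(4,n)`. -/
def Dset (n : ℕ) (f : GaloisField 2 n → GaloisField 2 n) : Set (GR n) :=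
  {g | ∃ x : GaloisField 2 n, g = teich n x + 2 * teich n (f x ^ 2 ^ (n - 1))}

/-- `S₁ = D_f \ {0}`. -/
def S1 (n : ℕ) (f : GaloisField 2 n → GaloisField 2 n) : Set (GR n) :=
  Dset n f \ {0}

/-- `S₂ = {−s : s ∈ S₁}`. -/
def S2 (n : ℕ) (f : GaloisField 2 n → GaloisField 2 n) : Set (GR n) :=
  (fun s => -s) '' S1 n f

/-- `S₃ = 2R \ {0}`. -/
def S3 (n : ℕ) : Set (GR n) :=
  {g | ∃ x : GR n, g = 2 * x} \ {0}

/-- `S₄`: the elements outside `S₀ ∪ S₁ ∪ S₂ ∪ S₃` appearing in the multiset `D_f²`. -/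
def S4 (n : ℕ) (f : GaloisField 2 n → GaloisField 2 n) : Set (GR n) :=
  {g | g ∉ ({0} : Set (GR n)) ∪ S1 n f ∪ S2 n f ∪ S3 n ∧
    ∃ x ∈ Dset n f, ∃ y ∈ Dset n f, g = x + y}

/-- `S₅`: the remaining elements. -/
def S5 (n : ℕ) (f : GaloisField 2 n → GaloisField 2 n) : Set (GR n) :=
  {g | g ∉ ({0} : Set (GR n)) ∪ S1 n f ∪ S2 n f ∪ S3 n ∪ S4 n f}

/-!
In Witt coordinates, `τ(x) + 2τ(√f(x))` is `(x, f x)`, because `2τ(s) = (0, s²)` in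
characteristic 2. From the Witt addition law `(a + b)₁ = a₁ + b₁ - a₀b₀`, the difference of the
points over `y + ε` and `y` is `(ε, f(y + ε) + f(y) + εy)`. So a difference of two points of `D_f`
with `g₀ = 0` is `0`, which rules out `S₃ = {g ≠ 0 | g₀ = 0}`, while for `ε = g₀ ≠ 0`
pseudo-planarity gives exactly one solution `y`: every such `g` is a difference of points over
`x = y + ε` and `y` in exactly one way. That pair lies in `S₁ × S₁` unless `y = 0` (then
`g ∈ S₁`) or `x = 0` (then `g ∈ S₂`).
-/

open MvPolynomial WittVector

theorem wittAdd_two_one : wittAdd 2 1 = X (0, 1) + X (1, 1) - X (0, 0) * X (1, 0) := by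
  apply map_injective (Int.castRingHom ℚ) Int.cast_injective
  have h0 : map (Int.castRingHom ℚ) (wittAdd 2 0) = X (0, 0) + X (1, 0) := by
    simp [wittAdd_zero]
  rw [wittAdd, map_wittStructureInt] at h0 ⊢
  rw [wittStructureRat_rec, Finset.sum_range_one, h0]
  have h2 : C (2⁻¹ : ℚ) * 2 = (1 : MvPolynomial (Fin 2 × ℕ) ℚ) := by
    rw [← map_ofNat C 2, ← C_mul, inv_mul_cancel₀ two_ne_zero, C_1]
  simp only [Nat.cast_ofNat, pow_one, one_div, wittPolynomial_one, map_add, map_mul, algHom_C,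
    algebraMap_eq, rename_X, map_pow, map_X, bind₁_X_right, pow_zero, C_1, tsub_zero, one_mul,
    map_sub]
  rw [map_ofNat C 2]
  linear_combination (X (0, 1) + X (1, 1) - X (0, 0) * X (1, 0)) * h2

namespace TruncatedWittVector

theorem ext_two {p : ℕ} {R : Type*} {a b : TruncatedWittVector p 2 R}
    (h0 : a.coeff 0 = b.coeff 0) (h1 : a.coeff 1 = b.coeff 1) : a = b :=
  ext fun i => by fin_cases i <;> assumption

variable {p : ℕ} [Fact p.Prime] {R : Type*} [CommRing R]

theorem add_coeff_zero (a b : TruncatedWittVector p 2 R) :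
    (a + b).coeff 0 = a.coeff 0 + b.coeff 0 := by
  obtain ⟨x, rfl⟩ := WittVector.truncate_surjective (p := p) (R := R) 2 a
  obtain ⟨y, rfl⟩ := WittVector.truncate_surjective (p := p) (R := R) 2 b
  simpa only [← map_add, WittVector.coeff_truncate, Fin.val_zero] using
    WittVector.add_coeff_zero x y

theorem sub_coeff_zero (a b : TruncatedWittVector p 2 R) :
    (a - b).coeff 0 = a.coeff 0 - b.coeff 0 := by
  rw [eq_sub_iff_add_eq, ← add_coeff_zero, sub_add_cancel]

theorem add_coeff_one (a b : TruncatedWittVector 2 2 R) :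
    (a + b).coeff 1 = a.coeff 1 + b.coeff 1 - a.coeff 0 * b.coeff 0 := by
  obtain ⟨x, rfl⟩ := WittVector.truncate_surjective (p := 2) (R := R) 2 a
  obtain ⟨y, rfl⟩ := WittVector.truncate_surjective (p := 2) (R := R) 2 b
  simp only [← map_add, WittVector.coeff_truncate, Fin.val_zero, Fin.val_one]
  simp [WittVector.add_coeff, wittAdd_two_one, peval]

theorem sub_coeff_one (a b : TruncatedWittVector 2 2 R) :
    (a - b).coeff 1 = a.coeff 1 - b.coeff 1 + (a.coeff 0 - b.coeff 0) * b.coeff 0 := by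
  have h := add_coeff_one (a - b) b
  rw [sub_add_cancel, sub_coeff_zero] at h
  linear_combination -h

variable [CharP R 2]

theorem two_mul_coeff_zero (a : TruncatedWittVector 2 2 R) : (2 * a).coeff 0 = 0 := by
  rw [two_mul, add_coeff_zero, CharTwo.add_self_eq_zero]

theorem two_mul_coeff_one (a : TruncatedWittVector 2 2 R) :
    (2 * a).coeff 1 = a.coeff 0 ^ 2 := by
  rw [two_mul, add_coeff_one, ← two_mul, CharTwo.two_eq_zero, zero_mul, zero_sub, CharTwo.neg_eq,
    sq]

end TruncatedWittVector

theorem teich_coeff_zero {n : ℕ} (x : GaloisField 2 n) : (teich n x).coeff 0 = x :=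
  (WittVector.coeff_truncate _ _).trans (teichmuller_coeff_zero 2 x)

theorem teich_coeff_one {n : ℕ} (x : GaloisField 2 n) : (teich n x).coeff 1 = 0 :=
  (WittVector.coeff_truncate _ _).trans (teichmuller_coeff_pos 2 x 1 one_pos)

theorem GaloisField.sq_pow_two_pow_pred {n : ℕ} (hn : 0 < n) (a : GaloisField 2 n) :
    (a ^ 2 ^ (n - 1)) ^ 2 = a := by
  have : Fintype (GaloisField 2 n) := Fintype.ofFinite _
  have hcard : Fintype.card (GaloisField 2 n) = 2 ^ n := by
    rw [← Nat.card_eq_fintype_card, GaloisField.card 2 n hn.ne']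
  rw [← pow_mul, ← pow_succ, Nat.sub_add_cancel hn, ← hcard, FiniteField.pow_card]

def IsPseudoPlanar {K : Type*} [Field K] (f : K → K) : Prop :=
  ∀ ε : K, ε ≠ 0 → Function.Bijective (fun x => f (x + ε) + f x + ε * x)

section GraphLift

variable {n : ℕ} (f : GaloisField 2 n → GaloisField 2 n)

def graphLift (x : GaloisField 2 n) : GR n :=
  teich n x + 2 * teich n (f x ^ 2 ^ (n - 1))

theorem Dset_eq_range : Dset n f = Set.range (graphLift f) := by
  ext g
  exact exists_congr fun x => eq_comm

theorem graphLift_coeff_zero (x : GaloisField 2 n) : (graphLift f x).coeff 0 = x := by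
  rw [graphLift, TruncatedWittVector.add_coeff_zero, teich_coeff_zero,
    TruncatedWittVector.two_mul_coeff_zero, add_zero]

theorem graphLift_coeff_one (hn : 0 < n) (x : GaloisField 2 n) :
    (graphLift f x).coeff 1 = f x := by
  rw [graphLift, TruncatedWittVector.add_coeff_one, teich_coeff_one,
    TruncatedWittVector.two_mul_coeff_one, TruncatedWittVector.two_mul_coeff_zero,
    teich_coeff_zero, GaloisField.sq_pow_two_pow_pred hn, mul_zero, sub_zero, zero_add]

theorem graphLift_injective : Function.Injective (graphLift f) := fun x y h => by
  simpa only [graphLift_coeff_zero] using congrArg (TruncatedWittVector.coeff 0) h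

theorem graphLift_zero (hf0 : f 0 = 0) : graphLift f 0 = 0 := by
  rw [graphLift, hf0, zero_pow (by positivity), teich, teichmuller_zero, map_zero, mul_zero,
    add_zero]

theorem graphLift_sub_graphLift_coeff_zero (x y : GaloisField 2 n) :
    (graphLift f x - graphLift f y).coeff 0 = x - y := by
  rw [TruncatedWittVector.sub_coeff_zero, graphLift_coeff_zero, graphLift_coeff_zero]

theorem graphLift_add_sub_graphLift_eq_iff (hn : 0 < n) (y ε : GaloisField 2 n) (g : GR n) :
    graphLift f (y + ε) - graphLift f y = g ↔
      g.coeff 0 = ε ∧ g.coeff 1 = f (y + ε) + f y + ε * y := by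
  have h0 : (graphLift f (y + ε) - graphLift f y).coeff 0 = ε := by
    rw [graphLift_sub_graphLift_coeff_zero, add_sub_cancel_left]
  have h1 : (graphLift f (y + ε) - graphLift f y).coeff 1 = f (y + ε) + f y + ε * y := by
    rw [TruncatedWittVector.sub_coeff_one, graphLift_coeff_one f hn, graphLift_coeff_one f hn,
      graphLift_coeff_zero, graphLift_coeff_zero, add_sub_cancel_left, CharTwo.sub_eq_add]
  constructor
  · rintro rfl
    exact ⟨h0, h1⟩
  · rintro ⟨hg0, hg1⟩
    exact TruncatedWittVector.ext_two (h0.trans hg0.symm) (h1.trans hg1.symm)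

theorem exists_graphLift_sub_graphLift_eq (hn : 0 < n) (hpp : IsPseudoPlanar f) {g : GR n}
    (hg : g.coeff 0 ≠ 0) :
    ∃ x y, graphLift f x - graphLift f y = g := by
  obtain ⟨y, hy⟩ := (hpp _ hg).2 (g.coeff 1)
  exact ⟨y + g.coeff 0, y, (graphLift_add_sub_graphLift_eq_iff f hn _ _ _).2 ⟨rfl, hy.symm⟩⟩

theorem eq_of_graphLift_sub_graphLift_eq (hn : 0 < n) (hpp : IsPseudoPlanar f)
    {x y x' y' : GaloisField 2 n} (hxy : x ≠ y)
    (h : graphLift f x - graphLift f y = graphLift f x' - graphLift f y') : x = x' ∧ y = y' := by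
  obtain ⟨ε, rfl⟩ : ∃ ε, x = y + ε := ⟨x - y, by ring⟩
  obtain ⟨ε', rfl⟩ : ∃ ε', x' = y' + ε' := ⟨x' - y', by ring⟩
  obtain ⟨h0, h1⟩ := (graphLift_add_sub_graphLift_eq_iff f hn y ε _).1 h
  obtain ⟨h0', h1'⟩ := (graphLift_add_sub_graphLift_eq_iff f hn y' ε' _).1 rfl
  obtain rfl : ε' = ε := h0'.symm.trans h0
  have hε : ε' ≠ 0 := by
    rintro rfl
    exact hxy (add_zero y)
  obtain rfl : y = y' := (hpp ε' hε).1 (h1.symm.trans h1')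
  exact ⟨rfl, rfl⟩

end GraphLift

abbrev diffPairs {G : Type*} [AddGroup G] (S : Set G) (g : G) : Type _ :=
  {p : G × G // p.1 ∈ S ∧ p.2 ∈ S ∧ p.1 - p.2 = g}

theorem card_diffPairs_zero {G : Type*} [AddGroup G] (S : Set G) :
    Nat.card (diffPairs S 0) = Nat.card S :=
  Nat.card_congr
    { toFun := fun p => ⟨p.1.1, p.2.1⟩
      invFun := fun s => ⟨(s, s), s.2, s.2, sub_self _⟩
      left_inv := fun p => Subtype.ext (Prod.ext rfl (sub_eq_zero.1 p.2.2.2))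
      right_inv := fun _ => rfl }

section DifferenceClasses

variable {n : ℕ} {f : GaloisField 2 n → GaloisField 2 n}

theorem S1_eq_image (hf0 : f 0 = 0) : S1 n f = graphLift f '' {x | x ≠ 0} := by
  rw [S1, Dset_eq_range, ← Set.image_univ, ← graphLift_zero f hf0, ← Set.image_singleton,
    ← Set.image_sdiff (graphLift_injective f), ← Set.compl_eq_univ_sdiff]
  rfl

theorem graphLift_mem_S1 (hf0 : f 0 = 0) {x : GaloisField 2 n} (hx : x ≠ 0) :
    graphLift f x ∈ S1 n f :=
  S1_eq_image hf0 ▸ Set.mem_image_of_mem _ hx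

theorem card_S1 (hn : 0 < n) (hf0 : f 0 = 0) : Nat.card (S1 n f) = 2 ^ n - 1 := by
  rw [S1_eq_image hf0, Nat.card_image_of_injective (graphLift_injective f), Set.coe_ofPred,
    ← Nat.card_congr unitsEquivNeZero, Nat.card_units, GaloisField.card 2 n hn.ne']

theorem mem_S3_iff (hn : 0 < n) {g : GR n} : g ∈ S3 n ↔ g ≠ 0 ∧ g.coeff 0 = 0 := by
  constructor
  · rintro ⟨⟨x, rfl⟩, hg⟩
    exact ⟨hg, TruncatedWittVector.two_mul_coeff_zero x⟩
  · rintro ⟨hg, hg0⟩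
    refine ⟨⟨teich n (g.coeff 1 ^ 2 ^ (n - 1)), TruncatedWittVector.ext_two ?_ ?_⟩, hg⟩
    · rw [TruncatedWittVector.two_mul_coeff_zero, hg0]
    · rw [TruncatedWittVector.two_mul_coeff_one, teich_coeff_zero,
        GaloisField.sq_pow_two_pow_pred hn]

theorem mem_S4_union_S5_iff {g : GR n} :
    g ∈ S4 n f ∪ S5 n f ↔ g ∉ ({0} : Set (GR n)) ∪ S1 n f ∪ S2 n f ∪ S3 n := by
  constructor
  · rintro (h4 | h5)
    · exact h4.1
    · exact fun h => h5 (Or.inl h)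
  · intro h
    by_cases h4 : g ∈ S4 n f
    · exact Or.inl h4
    · exact Or.inr fun h' => h'.elim h h4

theorem subsingleton_diffPairs_S1 (hn : 0 < n) (hpp : IsPseudoPlanar f) (hf0 : f 0 = 0)
    {g : GR n} (hg : g ≠ 0) :
    Subsingleton (diffPairs (S1 n f) g) := by
  rw [S1_eq_image hf0]
  constructor
  rintro ⟨⟨a, b⟩, ha, hb, hab⟩ ⟨⟨a', b'⟩, ha', hb', hab'⟩
  dsimp only at ha hb hab ha' hb' hab'
  obtain ⟨x, -, rfl⟩ := ha
  obtain ⟨y, -, rfl⟩ := hb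
  obtain ⟨x', -, rfl⟩ := ha'
  obtain ⟨y', -, rfl⟩ := hb'
  have hne : x ≠ y := by
    rintro rfl
    exact hg (hab ▸ sub_self _)
  obtain ⟨rfl, rfl⟩ := eq_of_graphLift_sub_graphLift_eq f hn hpp hne (hab.trans hab'.symm)
  rfl

theorem nonempty_diffPairs_S1_iff (hn : 0 < n) (hpp : IsPseudoPlanar f) (hf0 : f 0 = 0)
    {g : GR n} (hg : g ≠ 0) :
    Nonempty (diffPairs (S1 n f) g) ↔ g ∈ S4 n f ∪ S5 n f := by
  rw [mem_S4_union_S5_iff]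
  simp only [Set.mem_union, Set.mem_singleton_iff, hg, false_or, not_or, and_assoc]
  constructor
  · rintro ⟨⟨⟨a, b⟩, ha, hb, rfl⟩⟩
    rw [S1_eq_image hf0] at ha hb
    obtain ⟨x, hx, rfl⟩ := ha
    obtain ⟨y, hy, rfl⟩ := hb
    have hne : x ≠ y := by
      rintro rfl
      exact hg (sub_self _)
    refine ⟨?_, ?_, ?_⟩
    · rw [S1_eq_image hf0]
      rintro ⟨x', -, hx'⟩
      refine hy (eq_of_graphLift_sub_graphLift_eq f hn hpp (x' := x') (y' := 0) hne ?_).2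
      rw [← hx', graphLift_zero f hf0, sub_zero]
    · rintro ⟨s, hs, hy'⟩
      rw [S1_eq_image hf0] at hs
      obtain ⟨y', -, rfl⟩ := hs
      refine hx (eq_of_graphLift_sub_graphLift_eq f hn hpp (x' := 0) (y' := y') hne ?_).1
      rw [← hy', graphLift_zero f hf0, zero_sub]
    · rw [mem_S3_iff hn, graphLift_sub_graphLift_coeff_zero, sub_eq_zero]
      exact fun h => hne h.2
  · rintro ⟨hS1, hS2, hS3⟩
    have hg0 : g.coeff 0 ≠ 0 := fun h => hS3 ((mem_S3_iff hn).2 ⟨hg, h⟩)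
    obtain ⟨x, y, rfl⟩ := exists_graphLift_sub_graphLift_eq f hn hpp hg0
    have hy : y ≠ 0 := by
      rintro rfl
      rw [graphLift_zero f hf0, sub_zero] at hg hS1
      refine hS1 (graphLift_mem_S1 hf0 ?_)
      rintro rfl
      exact hg (graphLift_zero f hf0)
    have hx : x ≠ 0 := by
      rintro rfl
      rw [graphLift_zero f hf0, zero_sub] at hS2
      exact hS2 (Set.mem_image_of_mem _ (graphLift_mem_S1 hf0 hy))
    exact ⟨⟨(graphLift f x, graphLift f y),
      graphLift_mem_S1 hf0 hx, graphLift_mem_S1 hf0 hy, rfl⟩⟩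

end DifferenceClasses

/-- **Lemma (differences of `S₁`).** For a pseudo-planar function `f` on `F = 𝔽_{2^n}` with
`f(0) = 0`, the multiset `S₁S₁⁻¹` of differences of `S₁ = D_f \ {0}` in the Galois ring
`R = W₂(F)` consists of `0` with multiplicity `2^n − 1`, the elements of `S₄ ∪ S₅` with
multiplicity one, and contains no element of `S₁ ∪ S₂ ∪ S₃`. -/
theorem S1_differences
    (n : ℕ) (hn : 0 < n)
    (f : GaloisField 2 n → GaloisField 2 n)
    (hpp : ∀ ε : GaloisField 2 n, ε ≠ 0 →
      Function.Bijective (fun x => f (x + ε) + f x + ε * x))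
    (hf0 : f 0 = 0) (g : GR n) :
    Nat.card {p : GR n × GR n // p.1 ∈ S1 n f ∧ p.2 ∈ S1 n f ∧ p.1 - p.2 = g} =
      if g = 0 then 2 ^ n - 1
      else if g ∈ S4 n f ∪ S5 n f then 1
      else 0 := by
  change Nat.card (diffPairs (S1 n f) g) = _
  split_ifs with hg hg45
  · rw [hg, card_diffPairs_zero, card_S1 hn hf0]
  · exact Nat.card_eq_one_iff_unique.2 ⟨subsingleton_diffPairs_S1 hn hpp hf0 hg,
      (nonempty_diffPairs_S1_iff hn hpp hf0 hg).2 hg45⟩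
  · exact Nat.card_eq_zero.2
      (.inl (not_nonempty_iff.1 (mt (nonempty_diffPairs_S1_iff hn hpp hf0 hg).1 hg45)))
end
end
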